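/- Functional equation of the local Borcherds product (automorphy factor): for all integers r, s ∈ ℤ and every w ∈ ℂ, Ψ(w + (r + sζ)/m) = e(−s·m·w − s²ζ/2 + sζ/2 + s/2) · Ψ(w). -/

import Mathlib

open Complex

/-- `e(x) = exp(2πix)`. -/
noncomputable def ee (x : ℂ) : ℂ := Complex.exp (2 * Real.pi * Complex.I * x)

/-- The sign `σ(q)`: `1` for `q ≥ 0` and `−1` for `q < 0`. -/
def sgn (q : ℤ) : ℂ := if 0 ≤ q then 1 else -1

/-- The `q`-th member of the local Borcherds product:
`∏_{p=0}^{m−1} (1 − e(σ(q)(w + (p + qζ)/m)))`. -/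
noncomputable def psiTerm (m : ℕ) (ζ : ℂ) (w : ℂ) (q : ℤ) : ℂ :=
  ∏ p ∈ Finset.range m, (1 - ee (sgn q * (w + ((p : ℂ) + (q : ℂ) * ζ) / (m : ℂ))))

/-- The local Borcherds product `Ψ(w)`. -/
noncomputable def Psi (m : ℕ) (ζ : ℂ) (w : ℂ) : ℂ := ∏' q : ℤ, psiTerm m ζ w q

/-!
Shifting `w` by `1 / m` rotates the `m` factors of every `psiTerm` cyclically, so `Ψ` has period
`1 / m`. Shifting `w` by `ζ / m` turns the `q`-th factor into the `(q + 1)`-th one except for the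
sign `σ`, which changes only between `q = -1` and `q = 0`; there
`1 − e(−x) = e(1/2 − x)(1 − e(x))` contributes the factor `e(1/2 − m w)`. The shift by `s ζ / m`
follows by induction on `s`, since the automorphy factor satisfies the matching cocycle relation.
-/

lemma ee_add (x y : ℂ) : ee (x + y) = ee x * ee y := by
  rw [ee, ee, ee, ← Complex.exp_add]; ring_nf

lemma ee_intCast (k : ℤ) : ee k = 1 := by
  rw [ee, mul_comm]
  exact Complex.exp_int_mul_two_pi_mul_I k

lemma ee_ne_zero (x : ℂ) : ee x ≠ 0 := Complex.exp_ne_zero _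

lemma ee_natCast_mul (n : ℕ) (x : ℂ) : ee (n * x) = ee x ^ n := by
  rw [ee, ee, ← Complex.exp_nat_mul]; ring_nf

lemma ee_sum {ι : Type*} (t : Finset ι) (f : ι → ℂ) :
    ee (∑ i ∈ t, f i) = ∏ i ∈ t, ee (f i) := by
  simp only [ee, Finset.mul_sum, Complex.exp_sum]

lemma norm_ee (z : ℂ) : ‖ee z‖ = Real.exp (-(2 * Real.pi * z.im)) := by
  simp [ee, Complex.norm_exp, Complex.mul_re, Complex.mul_im]

lemma norm_ee_lt_one {z : ℂ} (hz : 0 < z.im) : ‖ee z‖ < 1 := by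
  rw [norm_ee, Real.exp_lt_one_iff, neg_lt_zero]
  positivity

lemma one_sub_ee_neg (x : ℂ) : 1 - ee (-x) = ee (1 / 2 - x) * (1 - ee x) := by
  have hhalf : ee (1 / 2) = -1 := by
    rw [ee, show 2 * (Real.pi : ℂ) * Complex.I * (1 / 2) = Real.pi * Complex.I by ring]
    exact Complex.exp_pi_mul_I
  have hcancel : ee (-x) * ee x = 1 := by
    rw [← ee_add, neg_add_cancel]; exact_mod_cast ee_intCast 0
  rw [sub_eq_add_neg (1 / 2 : ℂ), ee_add, hhalf]
  linear_combination -hcancel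

lemma sgn_eq_one_or_neg_one (q : ℤ) : sgn q = 1 ∨ sgn q = -1 := by
  unfold sgn; split_ifs <;> simp

lemma sgn_mul_intCast (q : ℤ) : sgn q * q = q.natAbs := by
  unfold sgn; split_ifs with h
  · simp [abs_of_nonneg h]
  · simp [abs_of_neg (not_le.mp h)]

lemma ee_sgn_mul_add_one (q : ℤ) (x : ℂ) : ee (sgn q * (x + 1)) = ee (sgn q * x) := by
  rcases sgn_eq_one_or_neg_one q with h | h <;> rw [h]
  · rw [one_mul, one_mul, ee_add, ← Int.cast_one, ee_intCast, mul_one]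
  · rw [neg_one_mul, neg_one_mul, neg_add, ee_add, ← Int.cast_one, ← Int.cast_neg, ee_intCast,
      mul_one]

lemma norm_ee_sgn_mul_le (q : ℤ) (x : ℂ) :
    ‖ee (sgn q * x)‖ ≤ ‖ee x‖ + ‖ee (-x)‖ := by
  rcases sgn_eq_one_or_neg_one q with h | h <;> rw [h] <;> simp

lemma Finset.prod_range_rotate_of_eq {M : Type*} [CommMonoid M] (f : ℕ → M) {n : ℕ}
    (hf : f n = f 0) : ∏ i ∈ Finset.range n, f (i + 1) = ∏ i ∈ Finset.range n, f i := by
  cases n with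
  | zero => rfl
  | succ n => rw [Finset.prod_range_succ, Finset.prod_range_succ' f, hf, mul_comm]

lemma summable_pow_natAbs {r : ℝ} (h0 : 0 ≤ r) (h1 : r < 1) :
    Summable fun q : ℤ ↦ r ^ q.natAbs := by
  apply Summable.of_nat_of_neg <;> simpa using summable_geometric_of_lt_one h0 h1

variable {m : ℕ} {ζ : ℂ}

lemma psiTerm_add_one_div (hm : m ≠ 0) (w : ℂ) (q : ℤ) :
    psiTerm m ζ (w + 1 / m) q = psiTerm m ζ w q := by
  unfold psiTerm
  convert Finset.prod_range_rotate_of_eq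
    (fun p : ℕ ↦ 1 - ee (sgn q * (w + ((p : ℂ) + q * ζ) / m))) ?_ using 5 with p
  · push_cast; ring
  · convert congrArg (1 - ·) (ee_sgn_mul_add_one q (w + ((0 : ℕ) + q * ζ) / m)) using 4
    field_simp; push_cast; ring

lemma Psi_periodic (hm : m ≠ 0) : Function.Periodic (Psi m ζ) (1 / m) := fun w ↦ by
  simp only [Psi, psiTerm_add_one_div hm]

lemma multipliable_psiTerm (hm : m ≠ 0) (hζ : 0 < ζ.im) (w : ℂ) :
    Multipliable (psiTerm m ζ w) := by
  refine multipliable_prod fun p _ ↦ ?_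
  simp only [sub_eq_add_neg]
  refine multipliable_one_add_of_summable ?_
  set x := w + (p : ℂ) / m
  have hρ : ‖ee (ζ / m)‖ < 1 := norm_ee_lt_one (by simp; positivity)
  refine ((summable_pow_natAbs (norm_nonneg _) hρ).mul_left (‖ee x‖ + ‖ee (-x)‖)).of_nonneg_of_le
      (fun _ ↦ norm_nonneg _) fun q ↦ ?_
  have hsplit : sgn q * (w + ((p : ℂ) + q * ζ) / m) = sgn q * x + q.natAbs * (ζ / m) := by
    linear_combination (ζ / m) * sgn_mul_intCast q
  rw [norm_neg, hsplit, ee_add, ee_natCast_mul, norm_mul, norm_pow]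
  gcongr
  exact norm_ee_sgn_mul_le q x

lemma prod_one_sub_ee_neg (hm : m ≠ 0) (w : ℂ) :
    ∏ p ∈ Finset.range m, (1 - ee (-(w + p / m)))
      = ee (1 / 2 - m * w) * ∏ p ∈ Finset.range m, (1 - ee (w + p / m)) := by
  have hsum : ∑ p ∈ Finset.range m, (1 / 2 - (w + (p : ℂ) / m)) = 1 / 2 - m * w := by
    have gauss := congrArg (Nat.cast : ℕ → ℂ) (Finset.sum_range_id_mul_two m)
    push_cast [Nat.cast_sub (Nat.one_le_iff_ne_zero.mpr hm)] at gauss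
    rw [Finset.sum_sub_distrib, Finset.sum_add_distrib,
      ← Finset.sum_div (Finset.range m) (fun p : ℕ ↦ (p : ℂ))]
    simp only [Finset.sum_const, Finset.card_range, nsmul_eq_mul]
    field_simp
    linear_combination -gauss
  rw [← hsum, ee_sum, ← Finset.prod_mul_distrib]
  exact Finset.prod_congr rfl fun p _ ↦ one_sub_ee_neg _

lemma psiTerm_sub_one_add_zeta_div (hm : m ≠ 0) (w : ℂ) (q : ℤ) :
    psiTerm m ζ (w + ζ / m) (q - 1)
      = (Pi.mulSingle 0 (ee (1 / 2 - m * w)) : ℤ → ℂ) q * psiTerm m ζ w q := by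
  have harg (p : ℕ) :
      w + ζ / m + ((p : ℂ) + ((q - 1 : ℤ) : ℂ) * ζ) / m = w + (p + q * ζ) / m := by
    push_cast; ring
  simp only [psiTerm, harg]
  rcases eq_or_ne q 0 with rfl | hq
  · have hsgn : sgn (0 - 1) = -1 ∧ sgn 0 = 1 := by norm_num [sgn]
    simp only [hsgn, Pi.mulSingle_eq_same, Int.cast_zero, zero_mul, add_zero, neg_one_mul, one_mul]
    exact prod_one_sub_ee_neg hm w
  · have hsgn : sgn (q - 1) = sgn q := by unfold sgn; congr 1; grind
    rw [Pi.mulSingle_eq_of_ne hq, one_mul, hsgn]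

lemma Psi_add_zeta_div (hm : m ≠ 0) (hζ : 0 < ζ.im) (w : ℂ) :
    Psi m ζ (w + ζ / m) = ee (1 / 2 - m * w) * Psi m ζ w := by
  have hc := hasProd_pi_single (0 : ℤ) (ee (1 / 2 - m * w))
  calc Psi m ζ (w + ζ / m) = ∏' q, psiTerm m ζ (w + ζ / m) (q - 1) :=
        ((Equiv.subRight 1).tprod_eq _).symm
    _ = ∏' q, (Pi.mulSingle 0 (ee (1 / 2 - m * w)) : ℤ → ℂ) q * psiTerm m ζ w q :=
        tprod_congr (psiTerm_sub_one_add_zeta_div hm w)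
    _ = ee (1 / 2 - m * w) * Psi m ζ w := by
        rw [hc.multipliable.tprod_mul (multipliable_psiTerm hm hζ w), hc.tprod_eq, Psi]

variable (m ζ) in
noncomputable def automorphyFactor (s : ℤ) (w : ℂ) : ℂ :=
  ee (-(s : ℂ) * (m : ℂ) * w - (s : ℂ) ^ 2 * ζ / 2 + (s : ℂ) * ζ / 2 + (s : ℂ) / 2)

lemma automorphyFactor_add_one (hm : m ≠ 0) (s : ℤ) (w : ℂ) :
    automorphyFactor m ζ (s + 1) w
      = ee (1 / 2 - m * (w + s * ζ / m)) * automorphyFactor m ζ s w := by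
  rw [automorphyFactor, automorphyFactor, ← ee_add]
  congr 1
  push_cast
  field_simp
  ring

lemma Psi_add_intCast_mul_zeta_div (hm : m ≠ 0) (hζ : 0 < ζ.im) (s : ℤ) (w : ℂ) :
    Psi m ζ (w + s * ζ / m) = automorphyFactor m ζ s w * Psi m ζ w := by
  have step (s : ℤ) : Psi m ζ (w + s * ζ / m) = automorphyFactor m ζ s w * Psi m ζ w ↔
      Psi m ζ (w + (s + 1 : ℤ) * ζ / m) = automorphyFactor m ζ (s + 1) w * Psi m ζ w := by
    rw [show w + ((s + 1 : ℤ) : ℂ) * ζ / m = w + s * ζ / m + ζ / m by push_cast; ring,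
      Psi_add_zeta_div hm hζ, automorphyFactor_add_one hm, mul_assoc,
      mul_right_inj' (ee_ne_zero _)]
  induction s using Int.induction_on with
  | zero => simp [automorphyFactor, ee]
  | succ k ih => exact (step k).1 ih
  | pred k ih => exact (step (-k - 1)).2 (by rwa [sub_add_cancel])

/-- Functional equation of the local Borcherds product (automorphy factor):
`Ψ(w + (r + sζ)/m) = e(−s·m·w − s²ζ/2 + sζ/2 + s/2)·Ψ(w)`. -/
theorem localBorcherds_functional_equation (m : ℕ) (hm : 1 ≤ m) (ζ : ℂ)
    (hζ : 0 < ζ.im) (r s : ℤ) (w : ℂ) :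
    Psi m ζ (w + ((r : ℂ) + (s : ℂ) * ζ) / (m : ℂ))
      = ee (-(s : ℂ) * (m : ℂ) * w - (s : ℂ) ^ 2 * ζ / 2 + (s : ℂ) * ζ / 2 + (s : ℂ) / 2)
          * Psi m ζ w := by
  have hm0 : m ≠ 0 := Nat.one_le_iff_ne_zero.mp hm
  calc Psi m ζ (w + ((r : ℂ) + (s : ℂ) * ζ) / (m : ℂ))
      = Psi m ζ (w + s * ζ / m + r * (1 / m)) := by ring_nf
    _ = Psi m ζ (w + s * ζ / m) := (Psi_periodic hm0).int_mul r _
    _ = automorphyFactor m ζ s w * Psi m ζ w := Psi_add_intCast_mul_zeta_div hm0 hζ s w
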